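/- The σ-CFDM sampler output converges to a barycenter: fix z ∈ R^D, barycenters c̄_1,...,c̄_{N^M} ∈ R^D and reals V_k, ū_k, σ ≥ 0 such that the quantity ‖z − c̄_k‖² + V_k + σū_k has a unique minimizer k*. Then lim_{S→∞} (S/(S−1))·Σ_k softmax(−(M S²/2)(‖z − ((S−1)/S)c̄_k‖² + ((S−1)/S)²V_k + σ((S−1)/S)ū_k))_k · ((S−1)/S)·c̄_k = c̄_{k*}. -/

import Mathlib

open Real BigOperators Filter

noncomputable def softmax {K : ℕ} (v : Fin K → ℝ) (k : Fin K) : ℝ :=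
  Real.exp (v k) / ∑ j, Real.exp (v j)

/-! As `S → ∞` the rescaled step `(S-1)/S → 1`, so the bracket multiplying `-M S²/2` converges
to the objective `‖z - c̄ k‖² + V k + σ ū k`. Since the prefactor `M S²/2` diverges, the gap between
any logit and the logit of the unique minimizer `k*` tends to `-∞`, so the softmax weights
concentrate on `k*`. The outer factor `S/(S-1)` cancels the inner `(S-1)/S` exactly. -/

open Topology

section Softmax

variable {K : ℕ}

theorem softmax_eq_exp_sub_div (v : Fin K → ℝ) (j k : Fin K) :
    softmax v k = exp (v k - v j) / ∑ i, exp (v i - v j) := by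
  simp only [softmax, exp_sub, ← Finset.sum_div]
  rw [div_div_div_cancel_right₀ (exp_ne_zero _)]

variable {ι : Type*} {l : Filter ι} {v : ι → Fin K → ℝ} {kstar : Fin K}

theorem tendsto_softmax_of_tendsto_sub_atBot
    (h : ∀ k ≠ kstar, Tendsto (fun S => v S k - v S kstar) l atBot) (k : Fin K) :
    Tendsto (fun S => softmax (v S) k) l (𝓝 (if k = kstar then 1 else 0)) := by
  have hnum : ∀ k, Tendsto (fun S => exp (v S k - v S kstar)) l
      (𝓝 (if k = kstar then 1 else 0)) := by
    intro k
    by_cases hk : k = kstar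
    · subst hk; simpa using tendsto_const_nhds
    · rw [if_neg hk]
      exact tendsto_exp_atBot.comp (h k hk)
  have hden : Tendsto (fun S => ∑ i, exp (v S i - v S kstar)) l (𝓝 1) := by
    simpa using tendsto_finsetSum Finset.univ fun i _ => hnum i
  simp_rw [softmax_eq_exp_sub_div _ kstar]
  rw [← div_one (if k = kstar then (1 : ℝ) else 0)]
  exact (hnum k).div hden one_ne_zero

theorem tendsto_sum_softmax_smul_of_tendsto_sub_atBot {E : Type*} [AddCommMonoid E]
    [TopologicalSpace E] [ContinuousAdd E] [Module ℝ E] [ContinuousSMul ℝ E]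
    (h : ∀ k ≠ kstar, Tendsto (fun S => v S k - v S kstar) l atBot) (c : Fin K → E) :
    Tendsto (fun S => ∑ k, softmax (v S) k • c k) l (𝓝 (c kstar)) := by
  have := tendsto_finsetSum Finset.univ fun k _ =>
    (tendsto_softmax_of_tendsto_sub_atBot h k).smul_const (c k)
  simpa [ite_smul] using this

end Softmax

theorem tendsto_neg_mul_sub_neg_mul_atBot {ι : Type*} {l : Filter ι} {β F G : ι → ℝ} {a b : ℝ}
    (hβ : Tendsto β l atTop) (hF : Tendsto F l (𝓝 a)) (hG : Tendsto G l (𝓝 b)) (hab : b < a) :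
    Tendsto (fun S => -β S * F S - -β S * G S) l atBot := by
  refine (hβ.atTop_mul_neg (sub_neg.2 hab) (hG.sub hF)).congr fun S => ?_
  ring

theorem ne_zero_of_ne_of_fin_pow {N M : ℕ} {k k' : Fin (N ^ M)} (h : k ≠ k') : M ≠ 0 := by
  rintro rfl
  exact h (Subsingleton.elim (α := Fin 1) k k')

theorem tendsto_sub_one_div_self_atTop : Tendsto (fun S : ℕ => ((S : ℝ) - 1) / S) atTop (𝓝 1) := by
  simpa [sub_eq_neg_add] using tendsto_add_mul_div_add_mul_atTop_nhds (-1 : ℝ) 0 1 one_ne_zero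

theorem tendsto_mul_sq_div_two_atTop {M : ℕ} (hM : M ≠ 0) :
    Tendsto (fun S : ℕ => (M : ℝ) * (S : ℝ) ^ 2 / 2) atTop atTop :=
  (((tendsto_pow_atTop two_ne_zero).comp tendsto_natCast_atTop_atTop).const_mul_atTop
    (by positivity)).atTop_div_const two_pos

theorem sigmaCFDM_sample_tendsto_barycenter_general {D N M : ℕ}
    (z : EuclideanSpace ℝ (Fin D)) (cbar : Fin (N ^ M) → EuclideanSpace ℝ (Fin D))
    (V ubar : Fin (N ^ M) → ℝ) (σ : ℝ) (kstar : Fin (N ^ M))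
    (hmin : ∀ k, k ≠ kstar →
      ‖z - cbar kstar‖ ^ 2 + V kstar + σ * ubar kstar < ‖z - cbar k‖ ^ 2 + V k + σ * ubar k) :
    Filter.Tendsto (fun S : ℕ =>
        ((S : ℝ) / ((S : ℝ) - 1)) •
          ∑ k, softmax (fun k' => -((M : ℝ) * (S : ℝ) ^ 2 / 2) *
              (‖z - (((S : ℝ) - 1) / (S : ℝ)) • cbar k'‖ ^ 2
                + (((S : ℝ) - 1) / (S : ℝ)) ^ 2 * V k'
                + σ * (((S : ℝ) - 1) / (S : ℝ)) * ubar k')) k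
            • ((((S : ℝ) - 1) / (S : ℝ)) • cbar k))
      Filter.atTop (nhds (cbar kstar)) := by
  let F : ℝ → Fin (N ^ M) → ℝ := fun t k => ‖z - t • cbar k‖ ^ 2 + t ^ 2 * V k + σ * t * ubar k
  have hF : ∀ k, Tendsto (fun S : ℕ => F (((S : ℝ) - 1) / S) k) atTop (𝓝 (F 1 k)) := fun k =>
    ((show Continuous (F · k) by fun_prop).tendsto 1).comp tendsto_sub_one_div_self_atTop
  have hgap : ∀ k ≠ kstar, Tendsto (fun S : ℕ =>
      -((M : ℝ) * (S : ℝ) ^ 2 / 2) * F (((S : ℝ) - 1) / S) k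
        - -((M : ℝ) * (S : ℝ) ^ 2 / 2) * F (((S : ℝ) - 1) / S) kstar) atTop atBot := fun k hk =>
    tendsto_neg_mul_sub_neg_mul_atBot (tendsto_mul_sq_div_two_atTop (ne_zero_of_ne_of_fin_pow hk))
      (hF k) (hF kstar) (by simpa [F] using hmin k hk)
  refine (tendsto_sum_softmax_smul_of_tendsto_sub_atBot hgap cbar).congr' ?_
  filter_upwards [eventually_gt_atTop 1] with S hS
  have hcancel : (S : ℝ) / ((S : ℝ) - 1) * (((S : ℝ) - 1) / S) = 1 := by
    have : (S : ℝ) - 1 ≠ 0 := sub_ne_zero.2 (by exact_mod_cast hS.ne')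
    field_simp
  rw [Finset.smul_sum]
  refine Finset.sum_congr rfl fun k _ => ?_
  rw [smul_comm, smul_smul, smul_smul, mul_assoc, hcancel, mul_one]

/-- Support of σ-CFDM samples: as the number of Euler steps `S → ∞`, the final-step output
converges to the barycenter `c̄ kstar` uniquely minimizing `‖z - c̄ k‖² + V k + σ ū k`. -/
theorem sigmaCFDM_sample_tendsto_barycenter {D N M : ℕ}
    (z : EuclideanSpace ℝ (Fin D)) (cbar : Fin (N ^ M) → EuclideanSpace ℝ (Fin D))
    (V ubar : Fin (N ^ M) → ℝ) (σ : ℝ) (hσ : 0 ≤ σ) (kstar : Fin (N ^ M))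
    (hmin : ∀ k, k ≠ kstar →
      ‖z - cbar kstar‖ ^ 2 + V kstar + σ * ubar kstar < ‖z - cbar k‖ ^ 2 + V k + σ * ubar k) :
    Filter.Tendsto (fun S : ℕ =>
        ((S : ℝ) / ((S : ℝ) - 1)) •
          ∑ k, softmax (fun k' => -((M : ℝ) * (S : ℝ) ^ 2 / 2) *
              (‖z - (((S : ℝ) - 1) / (S : ℝ)) • cbar k'‖ ^ 2
                + (((S : ℝ) - 1) / (S : ℝ)) ^ 2 * V k'
                + σ * (((S : ℝ) - 1) / (S : ℝ)) * ubar k')) k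
            • ((((S : ℝ) - 1) / (S : ℝ)) • cbar k))
      Filter.atTop (nhds (cbar kstar)) :=
  sigmaCFDM_sample_tendsto_barycenter_general z cbar V ubar σ kstar hmin
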